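/- arXiv:2406.05509 — 3 statements merged into one kernel-verified Lean document; each statement's English description precedes it below -/
import Mathlib

section
/- Let V1 and V2 be finite types, let F1 be a family of finsets of V1 and F2 a family of finsets of V2, and define the family F of finsets of the sum type V1 ⊕ V2 by: S ∈ F if and only if the finset {v : V1 | Sum.inl v ∈ S} belongs to F1 and the finset {w : V2 | Sum.inr w ∈ S} belongs to F2. Then the TAR graph of F is isomorphic, as a simple graph, to the box (Cartesian) product of the TAR graph of F1 and the TAR graph of F2, via the map sending S to the pair of its restrictions to V1 and V2. -/
variable {V : Type*} [Fintype V] [DecidableEq V]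

/-- A family of finsets is superset-closed if it is closed under taking supersets. -/
def SupersetClosed (F : Finset (Finset V)) : Prop :=
  ∀ ⦃S T : Finset V⦄, S ∈ F → S ⊆ T → T ∈ F

/-- A minimal member of a family: a member no proper subset of which is a member. -/
def IsMinimalMem (F : Finset (Finset V)) (M : Finset V) : Prop :=
  M ∈ F ∧ ∀ M' : Finset V, M' ⊂ M → M' ∉ F

/-- The TAR graph of a family of finsets: vertices are the members of the family,
two members being adjacent iff their symmetric difference has exactly one element. -/
def TARGraph (F : Finset (Finset V)) : SimpleGraph {S : Finset V // S ∈ F} where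
  Adj S T := (symmDiff S.1 T.1).card = 1
  symm := ⟨fun S T h => by rwa [symmDiff_comm] at h⟩
  loopless := ⟨fun S h => by simp [symmDiff_self] at h⟩

instance (F : Finset (Finset V)) : DecidableRel (TARGraph F).Adj :=
  fun S T => inferInstanceAs (Decidable ((symmDiff S.1 T.1).card = 1))

/-! A finset of `α ⊕ β` is the same as its pair of parts, and the parts of a symmetric difference
are the symmetric differences of the parts, so its size is the sum of theirs. Hence it has size
one exactly when one part changes by a single element and the other does not change, which is
adjacency in the box product. -/

namespace Finset

variable {α β : Type*} [DecidableEq α] [DecidableEq β]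

lemma toLeft_symmDiff (u v : Finset (α ⊕ β)) :
    (symmDiff u v).toLeft = symmDiff u.toLeft v.toLeft := by
  ext; simp [mem_symmDiff]

lemma toRight_symmDiff (u v : Finset (α ⊕ β)) :
    (symmDiff u v).toRight = symmDiff u.toRight v.toRight := by
  ext; simp [mem_symmDiff]

lemma card_symmDiff_eq_one_iff_toLeft_toRight {u v : Finset (α ⊕ β)} :
    #(symmDiff u v) = 1 ↔
      #(symmDiff u.toLeft v.toLeft) = 1 ∧ u.toRight = v.toRight ∨
        #(symmDiff u.toRight v.toRight) = 1 ∧ u.toLeft = v.toLeft := by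
  rw [← symmDiff_eq_bot (a := u.toLeft), ← symmDiff_eq_bot (a := u.toRight)]
  simp only [bot_eq_empty, ← card_eq_zero]
  rw [← card_toLeft_add_card_toRight, toLeft_symmDiff, toRight_symmDiff]
  omega

lemma univ_filter_inl_mem_eq_toLeft [Fintype α] (u : Finset (α ⊕ β)) :
    univ.filter (fun a => Sum.inl a ∈ u) = u.toLeft := by
  ext; simp

lemma univ_filter_inr_mem_eq_toRight [Fintype β] (u : Finset (α ⊕ β)) :
    univ.filter (fun b => Sum.inr b ∈ u) = u.toRight := by
  ext; simp

end Finset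

open Finset SimpleGraph in
def TARGraph.sumIsoBoxProd {α β : Type*} [Fintype α] [DecidableEq α] [Fintype β] [DecidableEq β]
    {F₁ : Finset (Finset α)} {F₂ : Finset (Finset β)} {F : Finset (Finset (α ⊕ β))}
    (hF : ∀ u, u ∈ F ↔ u.toLeft ∈ F₁ ∧ u.toRight ∈ F₂) :
    TARGraph F ≃g TARGraph F₁ □ TARGraph F₂ where
  toEquiv := (sumEquiv.toEquiv.subtypeEquiv hF).trans Equiv.subtypeProdEquivProd
  map_rel_iff' {u v} := by
    simp only [boxProd_adj, TARGraph, Subtype.ext_iff]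
    exact card_symmDiff_eq_one_iff_toLeft_toRight.symm

open SimpleGraph in
theorem stmt0 {V1 V2 : Type*} [Fintype V1] [DecidableEq V1] [Fintype V2] [DecidableEq V2]
    (F1 : Finset (Finset V1)) (F2 : Finset (Finset V2)) (F : Finset (Finset (V1 ⊕ V2)))
    (hF : ∀ S : Finset (V1 ⊕ V2), S ∈ F ↔
      (Finset.univ.filter (fun v => Sum.inl v ∈ S) ∈ F1 ∧
       Finset.univ.filter (fun w => Sum.inr w ∈ S) ∈ F2)) :
    ∃ φ : TARGraph F ≃g (TARGraph F1 □ TARGraph F2),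
      ∀ S : {S : Finset (V1 ⊕ V2) // S ∈ F},
        ((φ S).1.1 = Finset.univ.filter (fun v => Sum.inl v ∈ S.1)) ∧
        ((φ S).2.1 = Finset.univ.filter (fun w => Sum.inr w ∈ S.1)) := by
  have hF' : ∀ S, S ∈ F ↔ S.toLeft ∈ F1 ∧ S.toRight ∈ F2 := by
    simpa only [Finset.univ_filter_inl_mem_eq_toLeft, Finset.univ_filter_inr_mem_eq_toRight]
      using hF
  refine ⟨TARGraph.sumIsoBoxProd hF', fun S => ⟨?_, ?_⟩⟩
  · exact (Finset.univ_filter_inl_mem_eq_toLeft S.1).symm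
  · exact (Finset.univ_filter_inr_mem_eq_toRight S.1).symm
end

section
/- Let V and V' be finite types, let F be a nonempty superset-closed family of finsets of V such that every subset of V of cardinality |V| − 1 belongs to F, and let F' be a nonempty superset-closed family of finsets of V' such that every subset of V' of cardinality |V'| − 1 belongs to F'. If the TAR graph of F and the TAR graph of F' are isomorphic as simple graphs, then |V| = |V'| and there exists a bijection ψ : V ≃ V' such that for every finset S of V, S ∈ F if and only if the image finset ψ(S) belongs to F'. (This is the abstract form of the main theorem: two base graphs with isomorphic X-TAR graphs have, after relabeling, exactly the same X-sets.) -/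
variable {V : Type*} [Fintype V] [DecidableEq V]

/-!
In the TAR graph of a superset-closed family the graph distance is the size of the symmetric
difference. Hence from every vertex `S` exactly `dist S univ` neighbours of `S` are closer to
`univ`: every element missing from `S` may be added. A vertex `U` of the TAR graph with this
property (a "cube root") forces the family to be closed under flipping any element outside `U`, so
`S ↦ S ∆ Uᶜ` is an automorphism of the TAR graph moving `U` to `univ`. Composing the given
isomorphism with such an automorphism we may assume that it maps `univ` to `univ`. It then
sends the neighbours `univ ∆ {x}` of `univ` to neighbours `univ ∆ {ψ x}`, and since `x ∈ S` iff
`S` is one step further from `univ ∆ {x}` than from `univ`, it maps `S` to `ψ(S)`.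
-/

open Finset
open scoped symmDiff

namespace Finset

variable {α : Type*} [DecidableEq α] {x : α} {A : Finset α}

theorem symmDiff_singleton_of_mem (h : x ∈ A) : A ∆ {x} = A.erase x := by
  ext y
  by_cases hy : y = x <;> simp [mem_symmDiff, hy, h]

theorem symmDiff_singleton_of_notMem (h : x ∉ A) : A ∆ {x} = insert x A := by
  ext y
  by_cases hy : y = x <;> simp [mem_symmDiff, hy, h]

theorem card_symmDiff_singleton_add_one (h : x ∈ A) : #(A ∆ {x}) + 1 = #A := by
  rw [symmDiff_singleton_of_mem h, card_erase_add_one h]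

theorem card_symmDiff_singleton_of_notMem (h : x ∉ A) : #(A ∆ {x}) = #A + 1 := by
  rw [symmDiff_singleton_of_notMem h, card_insert_of_notMem h]

theorem card_symmDiff_singleton_lt_iff : #(A ∆ {x}) < #A ↔ x ∈ A := by
  by_cases h : x ∈ A
  · have := card_symmDiff_singleton_add_one h
    simp only [h, iff_true]
    omega
  · simp [h, card_symmDiff_singleton_of_notMem h]

theorem card_symmDiff_singleton_eq_add_one_iff : #(A ∆ {x}) = #A + 1 ↔ x ∉ A := by
  by_cases h : x ∈ A
  · have := card_symmDiff_singleton_add_one h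
    simp only [h, not_true_eq_false, iff_false]
    omega
  · simp [h, card_symmDiff_singleton_of_notMem h]

theorem univ_symmDiff_singleton_mem [Fintype α] {F : Finset (Finset α)}
    (hF : ∀ S : Finset α, #S = Fintype.card α - 1 → S ∈ F) (x : α) : univ ∆ {x} ∈ F :=
  hF _ (by rw [← top_eq_univ, top_symmDiff, hnot_eq_compl, card_compl, card_singleton])

theorem symmDiff_mem_of_forall_symmDiff_singleton_mem {F : Finset (Finset α)} {K : Finset α}
    (hK : ∀ x ∈ K, ∀ S ∈ F, S ∆ {x} ∈ F) {S : Finset α} (hS : S ∈ F) : S ∆ K ∈ F := by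
  induction K using Finset.induction_on with
  | empty => rwa [← bot_eq_empty, symmDiff_bot]
  | insert x K hxK ih =>
    have hsplit : S ∆ insert x K = S ∆ K ∆ {x} := by
      rw [insert_eq, ← symmDiff_eq_union (disjoint_singleton_left.2 hxK), symmDiff_left_comm,
        symmDiff_comm]
    rw [hsplit]
    exact hK x (mem_insert_self x K) _ (ih fun y hy => hK y (mem_insert_of_mem hy))

end Finset

namespace SupersetClosed

variable {α : Type*} {F : Finset (Finset α)}

theorem univ_mem [Fintype α] (hsup : SupersetClosed F)
    (hF : ∀ S : Finset α, #S = Fintype.card α - 1 → S ∈ F) : univ ∈ F := by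
  obtain ⟨S, -, hS⟩ :=
    exists_subset_card_eq (s := (univ : Finset α)) (n := Fintype.card α - 1) (by simp)
  exact hsup (hF S hS) (subset_univ S)

theorem exists_symmDiff_singleton_mem [DecidableEq α] (hsup : SupersetClosed F) {S T : Finset α}
    (hS : S ∈ F) (hT : T ∈ F) (hST : S ≠ T) : ∃ x ∈ S ∆ T, S ∆ {x} ∈ F := by
  by_cases hTS : T ⊆ S
  · obtain ⟨x, hx⟩ := sdiff_nonempty.2 fun hST' => hST (hST'.antisymm hTS)
    obtain ⟨hxS, hxT⟩ := mem_sdiff.1 hx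
    refine ⟨x, symmDiff_subset_sdiff hx, ?_⟩
    rw [symmDiff_singleton_of_mem hxS]
    exact hsup hT fun y hy => mem_erase.2 ⟨fun hyx => hxT (hyx ▸ hy), hTS hy⟩
  · obtain ⟨x, hx⟩ := sdiff_nonempty.2 hTS
    obtain ⟨hxT, hxS⟩ := mem_sdiff.1 hx
    refine ⟨x, symmDiff_subset_sdiff' hx, ?_⟩
    rw [symmDiff_singleton_of_notMem hxS]
    exact hsup hS (subset_insert x S)

end SupersetClosed

namespace SimpleGraph

variable {W W' : Type*} {G : SimpleGraph W} {G' : SimpleGraph W'}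

theorem Hom.edist_map_le (f : G →g G') (u v : W) : G'.edist (f u) (f v) ≤ G.edist u v := by
  by_cases hr : G.Reachable u v
  · obtain ⟨p, hp⟩ := hr.exists_walk_length_eq_edist
    rw [← hp, ← Walk.length_map f]
    exact edist_le _
  · exact edist_eq_top_of_not_reachable hr ▸ le_top

theorem Iso.edist_map (φ : G ≃g G') (u v : W) : G'.edist (φ u) (φ v) = G.edist u v :=
  le_antisymm (φ.toHom.edist_map_le u v) <| by
    simpa using φ.symm.toHom.edist_map_le (φ u) (φ v)

theorem Iso.dist_map (φ : G ≃g G') (u v : W) : G'.dist (φ u) (φ v) = G.dist u v := by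
  rw [dist, dist, φ.edist_map]

def closerNeighborSet (G : SimpleGraph W) (u s : W) : Set W :=
  {t | G.Adj s t ∧ G.dist t u < G.dist s u}

-- The name comes from the hypercube, in which every vertex is a cube root.
def IsCubeRoot (G : SimpleGraph W) (u : W) : Prop :=
  ∀ s, (G.closerNeighborSet u s).ncard = G.dist s u

theorem Iso.closerNeighborSet_map (φ : G ≃g G') (u s : W) :
    G'.closerNeighborSet (φ u) (φ s) = φ '' G.closerNeighborSet u s := by
  ext t
  obtain ⟨t, rfl⟩ := φ.surjective t
  simp [closerNeighborSet, φ.dist_map, φ.map_adj_iff, φ.injective.mem_set_image]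

theorem Iso.isCubeRoot_map (φ : G ≃g G') {u : W} (hu : G.IsCubeRoot u) :
    G'.IsCubeRoot (φ u) := by
  intro s
  obtain ⟨s, rfl⟩ := φ.surjective s
  rw [φ.closerNeighborSet_map, Set.ncard_image_of_injective _ φ.injective, φ.dist_map, hu s]

end SimpleGraph

namespace TARGraph

open SimpleGraph

variable {F : Finset (Finset V)} {V' : Type*} [Fintype V'] [DecidableEq V']
  {F' : Finset (Finset V')}

theorem adj_iff {S T : {S : Finset V // S ∈ F}} :
    (TARGraph F).Adj S T ↔ ∃ x, T.1 = S.1 ∆ {x} := by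
  change #(S.1 ∆ T.1) = 1 ↔ _
  rw [card_eq_one]
  refine exists_congr fun x => ⟨fun h => ?_, fun h => ?_⟩
  · rw [← h, symmDiff_symmDiff_cancel_left]
  · rw [h, symmDiff_symmDiff_cancel_left]

theorem exists_walk_length_eq_card_symmDiff (hsup : SupersetClosed F)
    (S T : {S : Finset V // S ∈ F}) :
    ∃ p : (TARGraph F).Walk S T, p.length = #(S.1 ∆ T.1) := by
  induction h : #(S.1 ∆ T.1) generalizing S with
  | zero =>
    obtain rfl : S = T := Subtype.ext (symmDiff_eq_empty.1 (card_eq_zero.1 h))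
    exact ⟨.nil, rfl⟩
  | succ n ih =>
    have hST : S.1 ≠ T.1 := fun hST => by simp [hST] at h
    obtain ⟨x, hx, hxF⟩ := hsup.exists_symmDiff_singleton_mem S.2 T.2 hST
    have hcard : #((S.1 ∆ {x}) ∆ T.1) = n := by
      have := card_symmDiff_singleton_add_one hx
      rw [symmDiff_right_comm]
      omega
    obtain ⟨p, hp⟩ := ih ⟨S.1 ∆ {x}, hxF⟩ hcard
    exact ⟨.cons (adj_iff.2 ⟨x, rfl⟩) p, by simp [hp]⟩

theorem card_symmDiff_le_length {S T : {S : Finset V // S ∈ F}} (p : (TARGraph F).Walk S T) :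
    #(S.1 ∆ T.1) ≤ p.length := by
  induction p with
  | nil => simp
  | @cons S R T hSR p ih =>
    calc #(S.1 ∆ T.1) ≤ #(S.1 ∆ R.1 ∪ R.1 ∆ T.1) := card_le_card (symmDiff_triangle _ _ _)
      _ ≤ #(S.1 ∆ R.1) + #(R.1 ∆ T.1) := card_union_le _ _
      _ ≤ (Walk.cons hSR p).length := by
        have : #(S.1 ∆ R.1) = 1 := hSR
        simp only [Walk.length_cons]
        omega

theorem dist_eq (hsup : SupersetClosed F) (S T : {S : Finset V // S ∈ F}) :
    (TARGraph F).dist S T = #(S.1 ∆ T.1) := by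
  obtain ⟨p, hp⟩ := exists_walk_length_eq_card_symmDiff hsup S T
  obtain ⟨q, hq⟩ := Reachable.exists_walk_length_eq_dist ⟨p⟩
  exact le_antisymm (hp ▸ dist_le p) (hq ▸ card_symmDiff_le_length q)

theorem ncard_closerNeighborSet (hsup : SupersetClosed F) (U S : {S : Finset V // S ∈ F}) :
    ((TARGraph F).closerNeighborSet U S).ncard = #{x ∈ S.1 ∆ U.1 | S.1 ∆ {x} ∈ F} := by
  rw [← Set.ncard_coe_finset]
  symm
  refine Set.ncard_congr (fun x hx => ⟨S.1 ∆ {x}, (mem_filter.1 hx).2⟩) ?_ ?_ ?_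
  · intro x hx
    refine ⟨adj_iff.2 ⟨x, rfl⟩, ?_⟩
    rw [dist_eq hsup, dist_eq hsup, symmDiff_right_comm, card_symmDiff_singleton_lt_iff]
    exact (mem_filter.1 hx).1
  · intro x _ y _ hxy
    exact singleton_injective (symmDiff_right_injective S.1 (congrArg Subtype.val hxy))
  · rintro T ⟨hST, hdist⟩
    obtain ⟨x, hx⟩ := adj_iff.1 hST
    rw [dist_eq hsup, dist_eq hsup, hx, symmDiff_right_comm, card_symmDiff_singleton_lt_iff]
      at hdist
    exact ⟨x, mem_filter.2 ⟨hdist, hx ▸ T.2⟩, Subtype.ext hx.symm⟩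

theorem isCubeRoot_univ (hsup : SupersetClosed F) (hU : univ ∈ F) :
    (TARGraph F).IsCubeRoot ⟨univ, hU⟩ := by
  intro S
  rw [ncard_closerNeighborSet hsup, dist_eq hsup, filter_true_of_mem]
  intro x hx
  have hxS : x ∉ S.1 := by simpa [mem_symmDiff] using hx
  rw [symmDiff_singleton_of_notMem hxS]
  exact hsup S.2 (subset_insert x S.1)

theorem symmDiff_singleton_mem_of_isCubeRoot (hsup : SupersetClosed F)
    {U : {S : Finset V // S ∈ F}} (hU : (TARGraph F).IsCubeRoot U) {S : Finset V} (hS : S ∈ F)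
    {x : V} (hx : x ∈ S ∆ U.1) : S ∆ {x} ∈ F := by
  have h := hU ⟨S, hS⟩
  rw [ncard_closerNeighborSet hsup, dist_eq hsup, card_filter_eq_iff] at h
  exact h x hx

theorem symmDiff_compl_mem_of_isCubeRoot (hsup : SupersetClosed F)
    {U : {S : Finset V // S ∈ F}} (hU : (TARGraph F).IsCubeRoot U) {S : Finset V} (hS : S ∈ F) :
    S ∆ U.1ᶜ ∈ F := by
  refine symmDiff_mem_of_forall_symmDiff_singleton_mem (fun x hx T hT => ?_) hS
  by_cases hxT : x ∈ T
  · exact symmDiff_singleton_mem_of_isCubeRoot hsup hU hT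
      (mem_symmDiff.2 (Or.inl ⟨hxT, mem_compl.1 hx⟩))
  · rw [symmDiff_singleton_of_notMem hxT]
    exact hsup hT (subset_insert x T)

def symmDiffIso (K : Finset V) (hK : ∀ S ∈ F, S ∆ K ∈ F) : TARGraph F ≃g TARGraph F where
  toFun S := ⟨S.1 ∆ K, hK _ S.2⟩
  invFun S := ⟨S.1 ∆ K, hK _ S.2⟩
  left_inv S := Subtype.ext (symmDiff_symmDiff_cancel_right _ _)
  right_inv S := Subtype.ext (symmDiff_symmDiff_cancel_right _ _)
  map_rel_iff' {S T} := by
    change #((S.1 ∆ K) ∆ (T.1 ∆ K)) = 1 ↔ #(S.1 ∆ T.1) = 1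
    rw [symmDiff_symmDiff_symmDiff_comm, symmDiff_self, symmDiff_bot]

theorem exists_iso_map_univ (hsup : SupersetClosed F) (hsup' : SupersetClosed F')
    (φ : TARGraph F ≃g TARGraph F') (hU : univ ∈ F) (hU' : univ ∈ F') :
    ∃ φ' : TARGraph F ≃g TARGraph F', φ' ⟨univ, hU⟩ = ⟨univ, hU'⟩ := by
  have hroot := φ.isCubeRoot_map (isCubeRoot_univ hsup hU)
  refine ⟨φ.trans (symmDiffIso _ fun S hS => symmDiff_compl_mem_of_isCubeRoot hsup' hroot hS),
    Subtype.ext ?_⟩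
  exact (symmDiff_compl_self _).trans top_eq_univ

theorem mem_iff_dist_eq (hsup : SupersetClosed F) (hU : univ ∈ F) {x : V}
    (hx : univ ∆ {x} ∈ F) (S : {S : Finset V // S ∈ F}) :
    x ∈ S.1 ↔ (TARGraph F).dist S ⟨univ ∆ {x}, hx⟩ = (TARGraph F).dist S ⟨univ, hU⟩ + 1 := by
  rw [dist_eq hsup, dist_eq hsup, ← symmDiff_assoc, card_symmDiff_singleton_eq_add_one_iff]
  simp [mem_symmDiff]

theorem exists_mem_iff_mem_of_map_univ (hsup : SupersetClosed F) (hsup' : SupersetClosed F')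
    (hU : univ ∈ F) (hU' : univ ∈ F') (hD : ∀ x : V, univ ∆ {x} ∈ F)
    (φ : TARGraph F ≃g TARGraph F') (hφ : φ ⟨univ, hU⟩ = ⟨univ, hU'⟩) :
    ∃ f : V → V', ∀ S x, x ∈ S.1 ↔ f x ∈ (φ S).1 := by
  have hadj (x : V) : ∃ y, (φ ⟨univ ∆ {x}, hD x⟩).1 = univ ∆ {y} := by
    have hadj : (TARGraph F).Adj ⟨univ, hU⟩ ⟨univ ∆ {x}, hD x⟩ := adj_iff.2 ⟨x, rfl⟩
    rw [← φ.map_adj_iff, hφ] at hadj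
    exact adj_iff.1 hadj
  choose f hf using hadj
  refine ⟨f, fun S x => ?_⟩
  have hφx : φ ⟨univ ∆ {x}, hD x⟩ = ⟨univ ∆ {f x}, hf x ▸ (φ _).2⟩ := Subtype.ext (hf x)
  rw [mem_iff_dist_eq hsup hU (hD x), mem_iff_dist_eq hsup' hU' (hf x ▸ (φ _).2), ← hφx, ← hφ,
    φ.dist_map, φ.dist_map]

theorem injective_of_forall_mem_iff (hD : ∀ x : V, univ ∆ {x} ∈ F)
    {β : Type*} {g : {S : Finset V // S ∈ F} → Finset β} {f : V → β}
    (h : ∀ S x, x ∈ S.1 ↔ f x ∈ g S) : Function.Injective f := by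
  intro x y hxy
  have hx := h ⟨univ ∆ {y}, hD y⟩ x
  have hy := h ⟨univ ∆ {y}, hD y⟩ y
  simp only [mem_symmDiff, mem_univ, mem_singleton, true_and, not_true_eq_false, and_false,
    or_false, false_iff] at hx hy
  by_contra hne
  exact hy (hxy ▸ hx.1 hne)

theorem exists_equiv_of_map_univ (hsup : SupersetClosed F) (hsup' : SupersetClosed F')
    (hU : univ ∈ F) (hU' : univ ∈ F') (hD : ∀ x : V, univ ∆ {x} ∈ F)
    (hD' : ∀ y : V', univ ∆ {y} ∈ F')
    (φ : TARGraph F ≃g TARGraph F') (hφ : φ ⟨univ, hU⟩ = ⟨univ, hU'⟩) :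
    ∃ ψ : V ≃ V', ∀ S, (φ S).1 = S.1.image ψ := by
  obtain ⟨f, hf⟩ := exists_mem_iff_mem_of_map_univ hsup hsup' hU hU' hD φ hφ
  have hφ' : φ.symm ⟨univ, hU'⟩ = ⟨univ, hU⟩ := φ.symm_apply_eq.2 hφ.symm
  obtain ⟨g, hg⟩ := exists_mem_iff_mem_of_map_univ hsup' hsup hU' hU hD' φ.symm hφ'
  have hf_inj := injective_of_forall_mem_iff hD hf
  have hcard := le_antisymm (Fintype.card_le_of_injective f hf_inj)
    (Fintype.card_le_of_injective g (injective_of_forall_mem_iff hD' hg))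
  let ψ := Equiv.ofBijective f ((Fintype.bijective_iff_injective_and_card f).2 ⟨hf_inj, hcard⟩)
  refine ⟨ψ, fun S => ext fun y => ?_⟩
  obtain ⟨x, rfl⟩ := ψ.surjective y
  rw [ψ.injective.mem_finset_image]
  exact (hf S x).symm

theorem mem_iff_image_mem (φ : TARGraph F ≃g TARGraph F') (ψ : V ≃ V')
    (hφ : ∀ S, (φ S).1 = S.1.image ψ) (S : Finset V) : S ∈ F ↔ S.image ψ ∈ F' := by
  refine ⟨fun hS => hφ ⟨S, hS⟩ ▸ (φ _).2, fun hS => ?_⟩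
  have h := hφ (φ.symm ⟨_, hS⟩)
  rw [φ.apply_symm_apply] at h
  exact image_injective ψ.injective h ▸ (φ.symm _).2

end TARGraph

theorem stmt9_general {V' : Type*} [Fintype V'] [DecidableEq V']
    (F : Finset (Finset V)) (hsup : SupersetClosed F)
    (hn1 : ∀ S : Finset V, S.card = Fintype.card V - 1 → S ∈ F)
    (F' : Finset (Finset V')) (hsup' : SupersetClosed F')
    (hn1' : ∀ S : Finset V', S.card = Fintype.card V' - 1 → S ∈ F')
    (hiso : Nonempty (TARGraph F ≃g TARGraph F')) :
    Fintype.card V = Fintype.card V' ∧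
    ∃ ψ : V ≃ V', ∀ S : Finset V, S ∈ F ↔ S.image ψ ∈ F' := by
  obtain ⟨φ⟩ := hiso
  have hU := hsup.univ_mem hn1
  have hU' := hsup'.univ_mem hn1'
  obtain ⟨φ', hφ'⟩ := TARGraph.exists_iso_map_univ hsup hsup' φ hU hU'
  obtain ⟨ψ, hψ⟩ := TARGraph.exists_equiv_of_map_univ hsup hsup' hU hU'
    (univ_symmDiff_singleton_mem hn1) (univ_symmDiff_singleton_mem hn1') φ' hφ'
  exact ⟨Fintype.card_congr ψ, ψ, TARGraph.mem_iff_image_mem φ' ψ hψ⟩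

theorem stmt9 {V' : Type*} [Fintype V'] [DecidableEq V']
    (F : Finset (Finset V)) (hne : F.Nonempty) (hsup : SupersetClosed F)
    (hn1 : ∀ S : Finset V, S.card = Fintype.card V - 1 → S ∈ F)
    (F' : Finset (Finset V')) (hne' : F'.Nonempty) (hsup' : SupersetClosed F')
    (hn1' : ∀ S : Finset V', S.card = Fintype.card V' - 1 → S ∈ F')
    (hiso : Nonempty (TARGraph F ≃g TARGraph F')) :
    Fintype.card V = Fintype.card V' ∧
    ∃ ψ : V ≃ V', ∀ S : Finset V, S ∈ F ↔ S.image ψ ∈ F' :=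
  stmt9_general F hsup hn1 F' hsup' hn1' hiso
end

section
/- Let V be a finite type with n = |V| and let F be a nonempty superset-closed family of finsets of V. Let X(F) be the minimum cardinality of a member of F and X̄(F) the maximum cardinality of a minimal member of F. If F has at least two distinct minimal members, then the X̄(F)-TAR graph of F is disconnected, and for every natural number k with k ≥ min(X(F) + X̄(F), n) the k-TAR graph of F is connected. -/
/-! In the `k`-TAR graph of a superset-closed family one can walk down from a member to any
member below it, removing one element at a time. So every member reaches a minimal member `N`
below it, and `N` is joined to a smallest member `A` through `N ∪ A`, whose size is at most
`min (|N| + |A|) n ≤ min (X + X̄) n`. On the other hand, a minimal member of the largest size `X̄`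
is isolated in the `X̄`-TAR graph: removing an element leaves the family and adding one exceeds
`X̄`. Since there is another minimal member, that graph is disconnected. -/

variable {V : Type*} [Fintype V] [DecidableEq V]

/-- The `k`-TAR graph: the subgraph of the TAR graph induced on members of
cardinality at most `k`. -/
def kTARGraph (F : Finset (Finset V)) (k : ℕ) :
    SimpleGraph {S : Finset V // S ∈ F ∧ S.card ≤ k} where
  Adj S T := (symmDiff S.1 T.1).card = 1
  symm := ⟨fun S T h => by rwa [symmDiff_comm] at h⟩
  loopless := ⟨fun S h => by simp [symmDiff_self] at h⟩

lemma Finset.ssubset_or_card_lt_of_card_symmDiff_eq_one {α : Type*} [DecidableEq α]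
    {S T : Finset α} (h : (symmDiff S T).card = 1) : T ⊂ S ∨ S.card < T.card := by
  obtain ⟨v, hv⟩ := Finset.card_eq_one.1 h
  have hT : T = symmDiff S {v} := by rw [← hv, symmDiff_symmDiff_cancel_left]
  by_cases hvS : v ∈ S
  · left
    rw [hT, symmDiff_of_ge (Finset.singleton_subset_iff.2 hvS), Finset.sdiff_singleton_eq_erase]
    exact Finset.erase_ssubset hvS
  · right
    rw [hT, (Finset.disjoint_singleton_right.2 hvS).symmDiff_eq_sup]
    simp [hvS]

lemma SimpleGraph.not_connected_of_forall_not_adj {α : Type*} {G : SimpleGraph α} {u w : α}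
    (huw : u ≠ w) (hu : ∀ v, ¬ G.Adj u v) : ¬ G.Connected := by
  intro hG
  obtain ⟨p⟩ := hG.preconnected u w
  cases p with
  | nil => exact huw rfl
  | cons h _ => exact hu _ h

lemma isMinimalMem_iff_minimal {α : Type*} {F : Finset (Finset α)} {M : Finset α} :
    IsMinimalMem F M ↔ Minimal (· ∈ F) M :=
  minimal_iff_forall_lt.symm

lemma exists_isMinimalMem_subset {α : Type*} {F : Finset (Finset α)} {S : Finset α}
    (hS : S ∈ F) : ∃ M ⊆ S, IsMinimalMem F M := by
  simpa only [isMinimalMem_iff_minimal] using exists_minimal_le_of_wellFoundedLT _ S hS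

namespace kTARGraph

variable {F : Finset (Finset V)} {k : ℕ}

lemma reachable_of_subset (hsup : SupersetClosed F) (u : {S : Finset V // S ∈ F ∧ S.card ≤ k})
    {M : Finset V} (hM : M ∈ F) (hMu : M ⊆ u.1) :
    (kTARGraph F k).Reachable u ⟨M, hM, (Finset.card_le_card hMu).trans u.2.2⟩ := by
  obtain ⟨S, hSF, hSk⟩ := u
  induction S using Finset.strongInduction with
  | H S ih =>
    obtain rfl | hMS := eq_or_ssubset_of_subset hMu
    · rfl
    obtain ⟨v, hvS, hvM⟩ := Finset.exists_of_ssubset hMS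
    have hMv : M ⊆ S.erase v := Finset.subset_erase.2 ⟨hMu, hvM⟩
    have hvk : (S.erase v).card ≤ k := (Finset.card_le_card (Finset.erase_subset v S)).trans hSk
    have hadj : (kTARGraph F k).Adj ⟨S, hSF, hSk⟩ ⟨S.erase v, hsup hM hMv, hvk⟩ := by
      change (symmDiff S (S.erase v)).card = 1
      rw [symmDiff_of_ge (Finset.erase_subset v S), Finset.sdiff_erase_self hvS,
        Finset.card_singleton]
    exact hadj.reachable.trans (ih _ (Finset.erase_ssubset hvS) (hsup hM hMv) hvk hMv)

lemma not_adj_of_isMinimalMem {u : {S : Finset V // S ∈ F ∧ S.card ≤ k}}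
    (hu : IsMinimalMem F u.1) (hcard : u.1.card = k) (w : {S : Finset V // S ∈ F ∧ S.card ≤ k}) :
    ¬ (kTARGraph F k).Adj u w := by
  intro h
  rcases Finset.ssubset_or_card_lt_of_card_symmDiff_eq_one h with hwu | hlt
  · exact hu.2 _ hwu w.2.1
  · exact absurd w.2.2 (by omega)

lemma connected_of_card_union_le (hsup : SupersetClosed F) {A : Finset V} (hA : A ∈ F)
    (hAk : A.card ≤ k) (hunion : ∀ N, IsMinimalMem F N → (N ∪ A).card ≤ k) :
    (kTARGraph F k).Connected := by
  let a : {S : Finset V // S ∈ F ∧ S.card ≤ k} := ⟨A, hA, hAk⟩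
  have hreach : ∀ u, (kTARGraph F k).Reachable u a := by
    intro u
    obtain ⟨N, hNu, hN⟩ := exists_isMinimalMem_subset u.2.1
    let b : {S : Finset V // S ∈ F ∧ S.card ≤ k} :=
      ⟨N ∪ A, hsup hA Finset.subset_union_right, hunion N hN⟩
    exact (reachable_of_subset hsup u hN.1 hNu).trans
      ((reachable_of_subset hsup b hN.1 Finset.subset_union_left).symm.trans
        (reachable_of_subset hsup b hA Finset.subset_union_right))
  exact (SimpleGraph.connected_iff _).2 ⟨fun u v => (hreach u).trans (hreach v).symm, ⟨a⟩⟩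

end kTARGraph

theorem stmt14_general (F : Finset (Finset V)) (hsup : SupersetClosed F)
    (x xbar : ℕ)
    (hx : IsLeast {k : ℕ | ∃ S ∈ F, S.card = k} x)
    (hxbar : IsGreatest {k : ℕ | ∃ M : Finset V, IsMinimalMem F M ∧ M.card = k} xbar)
    (htwo : ∃ M1 M2 : Finset V, IsMinimalMem F M1 ∧ IsMinimalMem F M2 ∧ M1 ≠ M2) :
    ¬ (kTARGraph F xbar).Connected ∧
    ∀ k : ℕ, min (x + xbar) (Fintype.card V) ≤ k → (kTARGraph F k).Connected := by
  obtain ⟨⟨M, hM, rfl⟩, hxbar_ge⟩ := hxbar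
  obtain ⟨⟨A, hA, rfl⟩, -⟩ := hx
  constructor
  · obtain ⟨M', hM', hM'M⟩ : ∃ M', IsMinimalMem F M' ∧ M' ≠ M := by
      obtain ⟨M1, M2, h1, h2, h12⟩ := htwo
      by_cases h1M : M1 = M
      · exact ⟨M2, h2, fun h2M => h12 (h1M.trans h2M.symm)⟩
      · exact ⟨M1, h1, h1M⟩
    refine SimpleGraph.not_connected_of_forall_not_adj (u := ⟨M, hM.1, le_rfl⟩)
      (w := ⟨M', hM'.1, hxbar_ge ⟨M', hM', rfl⟩⟩) (fun h => hM'M ?_)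
      (kTARGraph.not_adj_of_isMinimalMem hM rfl)
    exact (congrArg Subtype.val h).symm
  · intro k hk
    refine kTARGraph.connected_of_card_union_le hsup hA ?_ fun N hN => ?_
    · have := A.card_le_univ
      omega
    · have := (N ∪ A).card_le_univ
      have := Finset.card_union_le N A
      have := hxbar_ge ⟨N, hN, rfl⟩
      omega

theorem stmt14 (F : Finset (Finset V)) (hne : F.Nonempty) (hsup : SupersetClosed F)
    (x xbar : ℕ)
    (hx : IsLeast {k : ℕ | ∃ S ∈ F, S.card = k} x)
    (hxbar : IsGreatest {k : ℕ | ∃ M : Finset V, IsMinimalMem F M ∧ M.card = k} xbar)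
    (htwo : ∃ M1 M2 : Finset V, IsMinimalMem F M1 ∧ IsMinimalMem F M2 ∧ M1 ≠ M2) :
    ¬ (kTARGraph F xbar).Connected ∧
    ∀ k : ℕ, min (x + xbar) (Fintype.card V) ≤ k → (kTARGraph F k).Connected :=
  stmt14_general F hsup x xbar hx hxbar htwo
end
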